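/- arXiv:2502.20259 — 2 statements merged into one kernel-verified Lean document; each statement's English description precedes it below -/
import Mathlib

section
/- In the C*-algebra M₂(ℂ) of 2×2 complex matrices, let a be the matrix with entries a₁₁ = 1, a₂₁ = 1, a₁₂ = a₂₂ = 0. Then sup{ |ρ(a)| : ρ a state on M₂(ℂ) } ≤ 5/4 < √2 = ‖a‖. -/
open scoped ComplexOrder Matrix.Norms.L2Operator

noncomputable section

local notation "M₂" => Matrix (Fin 2) (Fin 2) ℂ

lemma star_fin_two (p q r s : ℂ) :
    star (!![p, q; r, s] : M₂) = !![star p, star r; star q, star s] := by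
  ext i j
  rw [Matrix.star_eq_conjTranspose]
  fin_cases i <;> fin_cases j <;> simp [Matrix.conjTranspose_apply]

lemma star_mul_self_fin_two (p q r s : ℂ) :
    star (!![p, q; r, s] : M₂) * !![p, q; r, s] =
      !![star p * p + star r * r, star p * q + star r * s;
         star q * p + star s * r, star q * q + star s * s] := by
  rw [star_fin_two, Matrix.mul_fin_two]

/-- A state on `M₂(ℂ)` (with the operator norm): a norm-one positive linear functional. -/
def IsState (ρ : M₂ →L[ℂ] ℂ) : Prop :=
  ‖ρ‖ = 1 ∧ ∀ a : M₂, 0 ≤ ρ (star a * a)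

lemma key (ρ : M₂ →L[ℂ] ℂ) (h : IsState ρ) :
    ‖ρ !![1, 0; 1, 0]‖ ≤ 5 / 4 := by
  obtain ⟨hn, hpos⟩ := h
  set α := ρ !![1,0;0,0] with hα
  set β := ρ !![0,1;0,0] with hβ
  set γ := ρ !![0,0;1,0] with hγ
  set δ := ρ !![0,0;0,1] with hδ
  -- positivity of diagonal units
  have h11 : 0 ≤ α := by
    have := hpos !![1,0;0,0]
    rwa [star_mul_self_fin_two, show (!![star 1 * 1 + star 0 * 0, star 1 * 0 + star 0 * 0;
      star 0 * 1 + star 0 * 0, star 0 * 0 + star 0 * 0] : M₂) = !![1,0;0,0] by norm_num] at this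
  have h22 : 0 ≤ δ := by
    have := hpos !![0,0;0,1]
    rwa [star_mul_self_fin_two, show (!![star 0 * 0 + star 0 * 0, star 0 * 0 + star 0 * 1;
      star 0 * 0 + star 1 * 0, star 0 * 0 + star 1 * 1] : M₂) = !![0,0;0,1] by norm_num] at this
  have hαre : 0 ≤ α.re := (Complex.le_def.mp h11).1
  have hαim : α.im = 0 := ((Complex.le_def.mp h11).2).symm
  have hδre : 0 ≤ δ.re := (Complex.le_def.mp h22).1
  have hδim : δ.im = 0 := ((Complex.le_def.mp h22).2).symm
  -- β = conj γ
  have hy1 : 0 ≤ α + β + γ + δ := by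
    have := hpos !![1,1;0,0]
    rw [star_mul_self_fin_two] at this
    rw [show (!![star 1 * 1 + star 0 * 0, star 1 * 1 + star 0 * 0;
      star 1 * 1 + star 0 * 0, star 1 * 1 + star 0 * 0] : M₂)
        = !![1,0;0,0] + !![0,1;0,0] + !![0,0;1,0] + !![0,0;0,1] by
          ext i j; fin_cases i <;> fin_cases j <;> norm_num] at this
    simpa only [map_add] using this
  have hy2 : 0 ≤ α + Complex.I * β - Complex.I * γ + δ := by
    have := hpos !![1, Complex.I; 0, 0]
    rw [star_mul_self_fin_two] at this
    rw [show (!![star 1 * 1 + star 0 * 0, star 1 * Complex.I + star 0 * 0;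
      star Complex.I * 1 + star 0 * 0, star Complex.I * Complex.I + star 0 * 0] : M₂)
        = !![1,0;0,0] + Complex.I • !![0,1;0,0] + (-Complex.I) • !![0,0;1,0] + !![0,0;0,1] by
          ext i j; fin_cases i <;> fin_cases j <;>
            simp [Matrix.smul_apply, Complex.ext_iff] <;> norm_num] at this
    simp only [map_add, map_smul, smul_eq_mul] at this
    convert this using 1
    ring
  have him : β.im + γ.im = 0 := by
    have := ((Complex.le_def.mp hy1).2).symm
    simpa [hαim, hδim] using this
  have hre : β.re = γ.re := by
    have := ((Complex.le_def.mp hy2).2).symm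
    simp [hαim, hδim, Complex.add_im, Complex.sub_im, Complex.mul_im] at this
    linarith
  have hβγ : β = (starRingEnd ℂ) γ := by
    apply Complex.ext <;> simp [Complex.conj_re, Complex.conj_im] <;> linarith [him, hre]
  -- the phase u of γ
  set u : ℂ := if γ = 0 then 1 else γ / (‖γ‖ : ℂ) with hu
  have huu : (starRingEnd ℂ) u * u = 1 := by
    rw [hu]
    split_ifs with h0
    · simp
    · have habs : ‖γ‖ ≠ 0 := norm_ne_zero_iff.mpr h0
      have habs' : (‖γ‖ : ℂ) ≠ 0 := by exact_mod_cast habs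
      rw [map_div₀, Complex.conj_ofReal, div_mul_div_comm,
        ← Complex.normSq_eq_conj_mul_self, ← Complex.ofReal_mul, ← Complex.sq_norm]
      rw [div_eq_one_iff_eq (by push_cast; exact mul_ne_zero habs' habs')]
      push_cast
      ring
  have hcγ : (starRingEnd ℂ) u * γ = (‖γ‖ : ℂ) := by
    rw [hu]
    split_ifs with h0
    · simp [h0]
    · have habs : ‖γ‖ ≠ 0 := norm_ne_zero_iff.mpr h0
      rw [map_div₀, Complex.conj_ofReal, div_mul_eq_mul_div,
        ← Complex.normSq_eq_conj_mul_self, ← Complex.sq_norm]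
      rw [div_eq_iff (by exact_mod_cast habs)]
      push_cast
      ring
  have hcβ : u * β = (‖γ‖ : ℂ) := by
    rw [hβγ]
    calc u * (starRingEnd ℂ) γ = (starRingEnd ℂ) ((starRingEnd ℂ) u * γ) := by
          rw [map_mul, Complex.conj_conj]
      _ = (‖γ‖ : ℂ) := by rw [hcγ, Complex.conj_ofReal]
  -- main positivity inequality : α.re + 4 δ.re ≥ 4 |γ|
  have hy3 : 0 ≤ α + -(2*u) * β + -(2*(starRingEnd ℂ) u) * γ + 4 * δ := by
    have := hpos !![1, -(2*u); 0, 0]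
    rw [star_mul_self_fin_two] at this
    rw [show (!![star 1 * 1 + star 0 * 0, star 1 * (-(2*u)) + star 0 * 0;
      star (-(2*u)) * 1 + star 0 * 0, star (-(2*u)) * (-(2*u)) + star 0 * 0] : M₂)
        = !![1,0;0,0] + (-(2*u)) • !![0,1;0,0] + (-(2*(starRingEnd ℂ) u)) • !![0,0;1,0]
            + (4:ℂ) • !![0,0;0,1] by
          ext i j; fin_cases i <;> fin_cases j <;>
            simp [Matrix.smul_apply, Complex.star_def] <;>
            linear_combination (4:ℂ) * huu] at this
    simpa only [map_add, map_smul, smul_eq_mul] using this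
  have hmain : 4 * ‖γ‖ ≤ α.re + 4 * δ.re := by
    have h := (Complex.le_def.mp hy3).1
    rw [show α + -(2*u) * β + -(2*(starRingEnd ℂ) u) * γ + 4 * δ
        = α - 2 * (u * β) - 2 * ((starRingEnd ℂ) u * γ) + 4 * δ by ring] at h
    rw [hcβ, hcγ] at h
    simp [Complex.sub_re, Complex.add_re, Complex.mul_re, Complex.ofReal_re,
      Complex.ofReal_im] at h
    linarith
  -- trace bound
  have hone : α.re + δ.re ≤ 1 := by
    have h1 : ρ 1 = α + δ := by
      rw [show (1 : M₂) = !![1,0;0,0] + !![0,0;0,1] by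
        ext i j; rw [Matrix.one_fin_two]; fin_cases i <;> fin_cases j <;> norm_num]
      rw [map_add]
    have hnorm1 : ‖(1 : M₂)‖ = 1 := by
      rw [Matrix.cstar_norm_def, map_one]
      exact ContinuousLinearMap.norm_id
    have := ρ.le_opNorm 1
    rw [hnorm1, hn, one_mul, h1] at this
    calc α.re + δ.re = (α + δ).re := by simp
      _ ≤ ‖α + δ‖ := Complex.re_le_norm _
      _ ≤ 1 := this
  -- conclude
  have hdecomp : ρ !![1, 0; 1, 0] = α + γ := by
    rw [show (!![1,0;1,0] : M₂) = !![1,0;0,0] + !![0,0;1,0] by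
      ext i j; fin_cases i <;> fin_cases j <;> norm_num]
    rw [map_add]
  rw [hdecomp]
  have habsα : ‖α‖ = α.re := by
    rw [show α = (α.re : ℂ) from Complex.ext rfl (by simp [hαim])]
    simp [Complex.norm_real, abs_of_nonneg hαre]
  calc ‖α + γ‖ ≤ ‖α‖ + ‖γ‖ := norm_add_le _ _
    _ = α.re + ‖γ‖ := by rw [habsα]
    _ ≤ 5 / 4 := by linarith

/-- For `a = [[1,0],[1,0]] ∈ M₂(ℂ)`,
`sup { |ρ(a)| : ρ a state } ≤ 5/4 < √2 = ‖a‖`. -/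
theorem sup_state_matrix_lt_norm :
    sSup {r : ℝ | ∃ ρ : M₂ →L[ℂ] ℂ, IsState ρ ∧ r = ‖ρ !![1, 0; 1, 0]‖} ≤ 5 / 4 ∧
      (5 / 4 : ℝ) < Real.sqrt 2 ∧ Real.sqrt 2 = ‖(!![1, 0; 1, 0] : M₂)‖ := by
  refine ⟨?_, ?_, ?_⟩
  · apply Real.sSup_le
    · rintro r ⟨ρ, hρ, rfl⟩
      exact key ρ hρ
    · norm_num
  · nlinarith [Real.sq_sqrt (by norm_num : (0:ℝ) ≤ 2), Real.sqrt_nonneg 2]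
  · have hE : ‖(!![1,0;0,0] : M₂)‖ = 1 := by
      have hp : star (!![1,0;0,0] : M₂) * !![1,0;0,0] = !![1,0;0,0] := by
        rw [star_mul_self_fin_two]; norm_num
      have h := CStarRing.norm_star_mul_self (x := (!![1,0;0,0] : M₂))
      rw [hp] at h
      have hne : (!![1,0;0,0] : M₂) ≠ 0 := by
        intro h0
        have := congrFun (congrFun h0 0) 0
        norm_num at this
      have hpos : 0 < ‖(!![1,0;0,0] : M₂)‖ := norm_pos_iff.mpr hne
      nlinarith
    have hsq : ‖(!![1, 0; 1, 0] : M₂)‖ * ‖(!![1, 0; 1, 0] : M₂)‖ = 2 := by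
      rw [← CStarRing.norm_star_mul_self (x := (!![1,0;1,0] : M₂))]
      rw [star_mul_self_fin_two,
        show (!![star 1 * 1 + star 1 * 1, star 1 * 0 + star 1 * 0;
          star 0 * 1 + star 0 * 1, star 0 * 0 + star 0 * 0] : M₂)
          = (2:ℂ) • !![1,0;0,0] by ext i j; fin_cases i <;> fin_cases j <;> norm_num]
      rw [norm_smul, hE]
      norm_num
    rw [show (2:ℝ) = ‖(!![1, 0; 1, 0] : M₂)‖ * ‖(!![1, 0; 1, 0] : M₂)‖ from hsq.symm,
      Real.sqrt_mul_self (norm_nonneg _)]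
end
end

section
/- There exist a C*-algebra A, a Hilbert A-module H, and T₂ ∈ L(H) such that sup_{θ ∈ [0,2π]} ‖Re(e^{iθ} T₂)‖ < w(T₂). (Concretely: A = H = M₂(ℂ), T₂ = left multiplication by [[1,0],[1,0]].) -/
open scoped ComplexOrder RightActions

noncomputable section

/-- The Hilbert C⋆-module class as it stood in the older Mathlib (right `A`-action via `Aᵐᵒᵖ`,
inner product `A`-linear on the right); Mathlib's `CStarModule` now uses a left action. -/
class CStarModuleRight (A E : Type*) [NonUnitalSemiring A] [StarRing A]
    [Module ℂ A] [AddCommGroup E] [Module ℂ E] [PartialOrder A] [SMul Aᵐᵒᵖ E] [Norm A] [Norm E]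
    extends Inner A E where
  inner_add_right {x} {y} {z} : inner x (y + z) = inner x y + inner x z
  inner_self_nonneg {x} : 0 ≤ inner x x
  inner_self {x} : inner x x = 0 ↔ x = 0
  inner_op_smul_right {a : A} {x y : E} : inner x (y <• a) = inner x y * a
  inner_smul_right_complex {z : ℂ} {x} {y} : inner x (z • y) = z • inner x y
  star_inner x y : star (inner x y) = inner y x
  norm_eq_sqrt_norm_inner_self x : ‖x‖ = √‖inner x x‖

/-- The numerical radius `w(T)` of a Hilbert C*-module operator. -/
def numRadius (A : Type*) {H : Type*} [NonUnitalCStarAlgebra A] [PartialOrder A]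
    [StarOrderedRing A] [NormedAddCommGroup H] [NormedSpace ℂ H] [SMul Aᵐᵒᵖ H] [CStarModuleRight A H]
    (T : H →L[ℂ] H) : ℝ :=
  sSup {r : ℝ | ∃ x : H, ‖x‖ = 1 ∧ r = ‖(inner A (T x) x : A)‖}

/-- A witness consisting of a C*-algebra `A`, a Hilbert `A`-module `H` and an adjointable
operator `T₂` on `H` with `sup_{θ ∈ [0,2π]} ‖Re(e^{iθ}T₂)‖ < w(T₂)`,
where `Re(S) = (S + S*)/2`. -/
structure ReSupCounterexample where
  A : Type
  [iA : NonUnitalCStarAlgebra A]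
  [iP : PartialOrder A]
  [iS : StarOrderedRing A]
  H : Type
  [iN : NormedAddCommGroup H]
  [iNS : NormedSpace ℂ H]
  [iM : SMul Aᵐᵒᵖ H]
  [iCM : CStarModuleRight A H]
  T₂ : H →L[ℂ] H
  T₂adj : H →L[ℂ] H
  adj : ∀ x y : H, (inner A (T₂ x) y : A) = inner A x (T₂adj y)
  lt : sSup {r : ℝ | ∃ θ ∈ Set.Icc (0 : ℝ) (2 * Real.pi),
        r = ‖(1 / 2 : ℂ) • (Complex.exp (θ * Complex.I) • T₂ +
              Complex.exp (-(θ * Complex.I)) • T₂adj)‖} < numRadius A T₂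

namespace ReSupCE

open scoped Matrix.Norms.L2Operator

/-- `M₂(ℂ)` with the operator (C*) norm. -/
abbrev M2 : Type := Matrix (Fin 2) (Fin 2) ℂ

noncomputable instance : CStarAlgebra M2 := {}
noncomputable instance : PartialOrder M2 := CStarAlgebra.spectralOrder _
noncomputable instance : StarOrderedRing M2 := CStarAlgebra.spectralOrderedRing _

noncomputable instance : CStarModuleRight M2 M2 where
  inner a b := star a * b
  inner_add_right := mul_add _ _ _
  inner_self_nonneg := star_mul_self_nonneg _
  inner_self := CStarRing.star_mul_self_eq_zero_iff _
  inner_op_smul_right {a x y} := by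
    show star x * (y * a) = star x * y * a
    rw [mul_assoc]
  inner_smul_right_complex := mul_smul_comm _ _ _
  star_inner x y := by
    show star (star x * y) = star y * x
    rw [star_mul, star_star]
  norm_eq_sqrt_norm_inner_self x := by
    show ‖x‖ = √‖star x * x‖
    rw [CStarRing.norm_star_mul_self, Real.sqrt_mul_self (norm_nonneg x)]

/-- The matrix `[[1,0],[1,0]]`. -/
def t : M2 := !![1,0;1,0]

lemma hst : star t = !![1,1;0,0] := by
  ext i j; fin_cases i <;> fin_cases j <;>
    simp [t, Matrix.star_eq_conjTranspose, Matrix.conjTranspose_apply]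

lemma h1 : t * star t + star t * t = t + star t + 1 := by
  rw [hst]
  norm_num [t, Matrix.mul_fin_two, Matrix.one_fin_two]
  ext i j; fin_cases i <;> fin_cases j <;> norm_num [Matrix.one_apply]

lemma h2 : star t * star t = star t := by
  rw [hst]; norm_num [Matrix.mul_fin_two]
  ext i; fin_cases i <;> norm_num [Matrix.one_apply]

lemma h3 : t * t = t := by norm_num [t, Matrix.mul_fin_two]

lemma h4 : star t * t = (2:ℂ) • !![1,0;0,0] := by
  rw [hst]; norm_num [t, Matrix.mul_fin_two, Matrix.smul_of, Matrix.smul_cons]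
  ext i; fin_cases i <;> norm_num [Matrix.one_apply]

lemma norm_e : ‖(!![1,0;0,0] : M2)‖ = 1 := by
  set e : M2 := !![1,0;0,0] with he
  have hse : star e = e := by
    ext i j; fin_cases i <;> fin_cases j <;>
      simp [he, Matrix.star_eq_conjTranspose, Matrix.conjTranspose_apply]
  have h1 : star e * e = e := by
    rw [hse]; norm_num [he, Matrix.mul_fin_two]
    ext i; fin_cases i <;> norm_num
  have h2 : ‖e‖ * ‖e‖ = ‖e‖ := by rw [← CStarRing.norm_star_mul_self, h1]
  have h3 : e ≠ 0 := by
    intro h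
    have := congrArg (fun m : M2 => m 0 0) h
    simp [he] at this
  have h4 : (0:ℝ) < ‖e‖ := norm_pos_iff.mpr h3
  nlinarith

lemma norm_t : ‖t‖ = Real.sqrt 2 := by
  have h2 : ‖t‖ * ‖t‖ = 2 := by
    rw [← CStarRing.norm_star_mul_self, h4, norm_smul]
    simp [norm_e]
  rw [show (2:ℝ) = ‖t‖ * ‖t‖ from h2.symm]
  rw [Real.sqrt_mul_self (norm_nonneg t)]

/-- Left multiplication by `t`. -/
noncomputable def T : M2 →L[ℂ] M2 := ContinuousLinearMap.mul ℂ M2 t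

/-- Left multiplication by `star t`. -/
noncomputable def T' : M2 →L[ℂ] M2 := ContinuousLinearMap.mul ℂ M2 (star t)

/-- The matrix `Re (e^{iθ} t)`. -/
noncomputable def sθ (θ : ℝ) : M2 :=
  (1 / 2 : ℂ) • (Complex.exp (θ * Complex.I) • t + Complex.exp (-(θ * Complex.I)) • star t)

variable (θ : ℝ)

lemma op_eq :
    (1 / 2 : ℂ) • (Complex.exp (θ * Complex.I) • T + Complex.exp (-(θ * Complex.I)) • T') =
      ContinuousLinearMap.mul ℂ M2 (sθ θ) := by
  simp [T, T', sθ, map_add, map_smul]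

lemma star_sθ : star (sθ θ) = sθ θ := by
  simp only [sθ, star_smul, star_add, star_smul, star_star, RCLike.star_def]
  rw [← Complex.exp_conj, ← Complex.exp_conj]
  simp only [map_neg, map_mul, map_div₀, map_one, map_ofNat, Complex.conj_I,
    Complex.conj_ofReal, mul_neg, neg_neg, neg_mul]
  module

lemma sθ_sq : sθ θ * sθ θ =
    ((Complex.exp (θ * Complex.I) + Complex.exp (-(θ * Complex.I))) / 2) • sθ θ
      + (1/4 : ℂ) • 1 := by
  have hab : Complex.exp (θ * Complex.I) * Complex.exp (-(θ * Complex.I)) = 1 := by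
    rw [← Complex.exp_add]; simp
  have hc : t * star t = t + star t + 1 - star t * t := by
    rw [eq_sub_iff_add_eq]; linear_combination (norm := abel) h1
  simp only [sθ, smul_add, add_mul, mul_add, smul_mul_smul_comm, smul_smul, h3, h2, hc]
  match_scalars <;> first
    | ring1
    | linear_combination (-1/4 : ℂ) * hab
    | linear_combination (1/4 : ℂ) * hab

lemma sqrt2_facts : (1:ℝ) ≤ Real.sqrt 2 ∧ Real.sqrt 2 * Real.sqrt 2 = 2 := by
  constructor
  · nlinarith [Real.sq_sqrt (by norm_num : (0:ℝ) ≤ 2), Real.sqrt_nonneg 2]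
  · exact Real.mul_self_sqrt (by norm_num)

lemma norm_sθ_le : ‖sθ θ‖ ≤ (1 + Real.sqrt 2) / 2 := by
  set n := ‖sθ θ‖ with hn
  have hn0 : 0 ≤ n := norm_nonneg _
  have hsq : n * n = ‖sθ θ * sθ θ‖ := by
    have h := CStarRing.norm_star_mul_self (x := sθ θ)
    rw [star_sθ θ] at h
    exact h.symm
  have hcos : ‖(Complex.exp (θ * Complex.I) + Complex.exp (-(θ * Complex.I))) / 2‖ ≤ 1 := by
    have hc : (Complex.exp (θ * Complex.I) + Complex.exp (-(θ * Complex.I))) / 2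
        = Complex.cos θ := by
      rw [Complex.cos]; ring_nf
    rw [hc, ← Complex.ofReal_cos, Complex.norm_real]
    exact Real.abs_cos_le_one θ
  have hkey : n * n ≤ n + 1/4 := by
    rw [hsq, sθ_sq θ]
    calc ‖((Complex.exp (θ * Complex.I) + Complex.exp (-(θ * Complex.I))) / 2) • sθ θ
          + (1/4 : ℂ) • 1‖
        ≤ ‖((Complex.exp (θ * Complex.I) + Complex.exp (-(θ * Complex.I))) / 2) • sθ θ‖
          + ‖(1/4 : ℂ) • (1 : M2)‖ := norm_add_le _ _
      _ = ‖(Complex.exp (θ * Complex.I) + Complex.exp (-(θ * Complex.I))) / 2‖ * n + 1/4 := by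
          rw [norm_smul, norm_smul, norm_one, mul_one]
          norm_num
          exact Or.inl rfl
      _ ≤ 1 * n + 1/4 :=
          add_le_add_left (mul_le_mul_of_nonneg_right hcos hn0) _
      _ = n + 1/4 := by ring
  obtain ⟨hs1, hs2⟩ := sqrt2_facts
  nlinarith [Real.sqrt_nonneg 2]

lemma adj_eq : ∀ x y : M2, (inner M2 (T x) y : M2) = inner M2 x (T' y) := by
  intro x y
  show star (t * x) * y = star x * (star t * y)
  rw [star_mul, mul_assoc]

theorem main : Nonempty ReSupCounterexample := by
  refine ⟨{ A := M2, H := M2, T₂ := T, T₂adj := T', adj := adj_eq, lt := ?_ }⟩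
  obtain ⟨hs1, hs2⟩ := sqrt2_facts
  have hub : sSup {r : ℝ | ∃ θ ∈ Set.Icc (0 : ℝ) (2 * Real.pi),
      r = ‖(1 / 2 : ℂ) • (Complex.exp (θ * Complex.I) • T +
            Complex.exp (-(θ * Complex.I)) • T')‖} ≤ (1 + Real.sqrt 2) / 2 := by
    apply Real.sSup_le
    · rintro r ⟨θ, -, rfl⟩
      rw [op_eq θ]
      exact (ContinuousLinearMap.opNorm_mul_apply_le ℂ M2 (sθ θ)).trans (norm_sθ_le θ)
    · positivity
  have hlb : Real.sqrt 2 ≤ numRadius M2 T := by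
    apply le_csSup
    · refine ⟨‖T‖, ?_⟩
      rintro r ⟨x, hx, rfl⟩
      calc ‖(inner M2 (T x) x : M2)‖ ≤ ‖T x‖ * ‖x‖ := by
            show ‖star (T x) * x‖ ≤ _
            exact (norm_mul_le _ _).trans (by rw [norm_star])
        _ ≤ ‖T‖ * ‖x‖ * ‖x‖ := by gcongr; exact T.le_opNorm x
        _ = ‖T‖ := by rw [hx]; ring
    · refine ⟨1, norm_one, ?_⟩
      have : (inner M2 (T (1:M2)) (1:M2) : M2) = star t := by
        show star (t * 1) * 1 = star t
        rw [mul_one, mul_one]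
      rw [this, Matrix.star_eq_conjTranspose, Matrix.l2_opNorm_conjTranspose, norm_t]
  have hlt : (1 + Real.sqrt 2) / 2 < Real.sqrt 2 := by nlinarith
  exact lt_of_le_of_lt hub (lt_of_lt_of_le hlt hlb)

end ReSupCE

/-- There exist a C*-algebra `A`, a Hilbert `A`-module `H`, and `T₂ ∈ L(H)` such that
`sup_{θ ∈ [0,2π]} ‖Re(e^{iθ}T₂)‖ < w(T₂)`. -/
theorem exists_sup_norm_re_lt_numRadius : Nonempty ReSupCounterexample :=
  ReSupCE.main
end
end
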